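/- Let X be a length space, I ⊆ ℝ a closed nondegenerate interval, λ > 1, and for each j ∈ ℕ let f_j : I → ℝ be measurable with 1/λ ≤ f_j(t) ≤ λ for all t ∈ I. Then for every j ∈ ℕ and all p ≠ q in I × X: 1/λ ≤ d̂_{f_j}(p,q) / d̂_σ(p,q) ≤ λ, where d̂_{f_j} is the null distance of the warped product I ×_{f_j} X and d̂_σ is the null distance of the Lorentzian product I × X. -/

import Mathlib

open MeasureTheory

/-- Causal relation of the warped product `I ×_f X`; for `f ≡ 1` it is the causal relation
of the Lorentzian product: `(s,x) ≼ (t,y)` iff `s ≤ t` and `d(x,y) ≤ t − s`. -/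
def WPCausal {X : Type*} [MetricSpace X] (f : ℝ → ℝ) (p q : ℝ × X) : Prop :=
  p.1 ≤ q.1 ∧
    ENNReal.ofReal (dist p.2 q.2) ≤ ∫⁻ u in Set.Ioc p.1 q.1, ENNReal.ofReal ((f u)⁻¹)

/-- `σ` is a piecewise causal chain with `n+1` segments from `p` to `q` inside `I × X`. -/
def WPChain {X : Type*} [MetricSpace X] (I : Set ℝ) (f : ℝ → ℝ) (p q : ℝ × X) (n : ℕ)
    (σ : ℕ → ℝ × X) : Prop :=
  σ 0 = p ∧ σ (n + 1) = q ∧ (∀ i ≤ n + 1, (σ i).1 ∈ I) ∧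
    ∀ i ≤ n, WPCausal f (σ i) (σ (i + 1)) ∨ WPCausal f (σ (i + 1)) (σ i)

/-- The null distance of the warped product `I ×_f X`. -/
noncomputable def nullDist {X : Type*} [MetricSpace X] (I : Set ℝ) (f : ℝ → ℝ)
    (p q : ℝ × X) : ℝ :=
  sInf { r | ∃ n σ, WPChain I f p q n σ ∧
    r = ∑ i ∈ Finset.range (n + 1), |(σ (i + 1)).1 - (σ i).1| }

/-!
A causal segment for `f` with `1/μ ≤ f ≤ μ` satisfies `d(x,y) ≤ μ |Δt|`, so by the triangle
inequality every chain from `p` to `q` has null length at least `|Δt|` and at least `d(x,y)/μ`.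
Conversely, cut an almost shortest path from `x` to `y` (available in a length space by repeated
almost-midpoints) into short pieces and traverse the `i`-th piece by a causal step of time length
`μ·d(zᵢ, zᵢ₊₁)`, going up or down greedily so that the time stays in a short window of `I` next
to the target time; a vertical segment then reaches `q`. This chain has null length at most
`μ · max(|Δt|, d(x,y)) + ε`. Both bounds are in terms of the sup metric of `ℝ × X`, which for
`f ≡ 1` is therefore exactly the null distance.
-/

open Finset

def IsLengthSpace (X : Type*) [MetricSpace X] : Prop :=
  ∀ x y : X, ∀ ε : ℝ, 0 < ε → ∃ z : X, max (dist x z) (dist z y) ≤ dist x y / 2 + ε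

lemma IsLengthSpace.exists_dyadic_subdivision {X : Type*} [MetricSpace X] (hX : IsLengthSpace X)
    (x y : X) (k : ℕ) {ε : ℝ} (hε : 0 < ε) :
    ∃ z : ℕ → X, z 0 = x ∧ z (2 ^ k) = y ∧
      ∀ i < 2 ^ k, dist (z i) (z (i + 1)) ≤ dist x y / 2 ^ k + ε := by
  induction k generalizing ε with
  | zero => exact ⟨fun i => if i = 0 then x else y, rfl, rfl, fun i hi => by simp_all [hε.le]⟩
  | succ k ih =>
    obtain ⟨z, hz0, hzk, hzd⟩ := ih (half_pos hε)
    choose m hm using fun j => hX (z j) (z (j + 1)) (ε / 4) (by positivity)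
    have hhalf : ∀ j < 2 ^ k,
        dist (z j) (z (j + 1)) / 2 + ε / 4 ≤ dist x y / 2 ^ (k + 1) + ε := by
      intro j hj
      have := hzd j hj
      rw [pow_succ, ← div_div]
      linarith
    refine ⟨fun i => if Even i then z (i / 2) else m (i / 2), by simp [hz0],
      by simp [pow_succ, hzk], fun i hi => ?_⟩
    obtain ⟨j, rfl | rfl⟩ := Nat.even_or_odd' i
    · have hj : j < 2 ^ k := by rw [pow_succ] at hi; omega
      have : (2 * j + 1) / 2 = j := by omega
      simpa [Nat.even_add_one, this] using (le_max_left _ _).trans ((hm j).trans (hhalf j hj))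
    · have hj : j < 2 ^ k := by rw [pow_succ] at hi; omega
      have h₁ : (2 * j + 1) / 2 = j := by omega
      have h₂ : (2 * j + 1 + 1) / 2 = j + 1 := by omega
      simpa [Nat.even_add_one, h₁, h₂] using (le_max_right _ _).trans ((hm j).trans (hhalf j hj))

lemma IsLengthSpace.exists_fine_subdivision {X : Type*} [MetricSpace X] (hX : IsLengthSpace X)
    (x y : X) {δ ε : ℝ} (hδ : 0 < δ) (hε : 0 < ε) :
    ∃ (N : ℕ) (z : ℕ → X), z 0 = x ∧ (∀ i, N ≤ i → z i = y) ∧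
      (∀ i, dist (z i) (z (i + 1)) ≤ δ) ∧
      ∑ i ∈ range N, dist (z i) (z (i + 1)) ≤ dist x y + ε := by
  obtain ⟨k, hk⟩ := pow_unbounded_of_one_lt ((dist x y + ε) / δ) one_lt_two
  have hk₀ : (0 : ℝ) < 2 ^ k := by positivity
  have hkδ : (dist x y + ε) / 2 ^ k ≤ δ :=
    (div_le_iff₀ hk₀).2 (by rw [div_lt_iff₀ hδ] at hk; linarith)
  obtain ⟨z, hz0, hzk, hzd⟩ := hX.exists_dyadic_subdivision x y k (div_pos hε hk₀)
  set w : ℕ → X := fun i => if i ≤ 2 ^ k then z i else y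
  have hwy : ∀ i, 2 ^ k ≤ i → w i = y := fun i hi => by
    dsimp only [w]
    split_ifs with h
    exacts [le_antisymm h hi ▸ hzk, rfl]
  have hwd : ∀ i < 2 ^ k, dist (w i) (w (i + 1)) ≤ (dist x y + ε) / 2 ^ k := fun i hi => by
    simpa [w, hi.le, Nat.succ_le_of_lt hi, add_div] using hzd i hi
  refine ⟨2 ^ k, w, by simp [w, hz0], hwy, fun i => ?_, ?_⟩
  · rcases lt_or_ge i (2 ^ k) with hi | hi
    · exact (hwd i hi).trans hkδ
    · rw [hwy i hi, hwy (i + 1) (by omega), dist_self]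
      exact hδ.le
  · calc ∑ i ∈ range (2 ^ k), dist (w i) (w (i + 1))
        ≤ ∑ _i ∈ range (2 ^ k), (dist x y + ε) / 2 ^ k :=
          sum_le_sum fun i hi => hwd i (mem_range.1 hi)
      _ = dist x y + ε := by
          rw [sum_const, card_range, nsmul_eq_mul]; push_cast; field_simp

lemma sub_mem_or_add_mem_of_ordConnected {I : Set ℝ} (hI : I.OrdConnected) {a b t r : ℝ}
    (ha : a ∈ I) (hb : b ∈ I) (ht : t ∈ I) (hr : 0 ≤ r) (hrab : 2 * r ≤ b - a) :
    t - r ∈ I ∨ t + r ∈ I := by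
  rcases le_total a (t - r) with h | h
  · exact .inl (hI.out ha ht ⟨h, by linarith⟩)
  · exact .inr (hI.out ht hb ⟨by linarith, by linarith⟩)

noncomputable def zigzag (c : ℝ) (h : ℕ → ℝ) (s : ℝ) : ℕ → ℝ
  | 0 => s
  | i + 1 => if zigzag c h s i + h i ≤ c then zigzag c h s i + h i else zigzag c h s i - h i

section zigzag

variable {c s H : ℝ} {h : ℕ → ℝ}

@[simp] lemma zigzag_zero : zigzag c h s 0 = s := rfl

lemma abs_zigzag_succ_sub (i : ℕ) (hi : 0 ≤ h i) :
    |zigzag c h s (i + 1) - zigzag c h s i| = h i := by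
  rw [zigzag]
  split_ifs <;> simp [abs_of_nonneg hi]

lemma zigzag_le (hs : s ≤ c) (hh : ∀ i, 0 ≤ h i) (i : ℕ) : zigzag c h s i ≤ c := by
  induction i with
  | zero => exact hs
  | succ i ih =>
    rw [zigzag]
    split_ifs with hup
    · exact hup
    · exact (sub_le_self _ (hh i)).trans ih

lemma zigzag_eq_or_le (hh : ∀ i, 0 ≤ h i ∧ h i ≤ H) (i : ℕ) :
    zigzag c h s i = s + ∑ j ∈ range i, h j ∨ c - 2 * H ≤ zigzag c h s i := by
  induction i with
  | zero => simp
  | succ i ih =>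
    rw [zigzag]
    split_ifs with hup
    · rcases ih with ih | ih
      · left; rw [ih, sum_range_succ]; ring
      · right; linarith [hh i]
    · right; linarith [hh i]

end zigzag

lemma exists_time_schedule {I : Set ℝ} (hI : I.OrdConnected) {s t H : ℝ}
    (hs : s ∈ I) (ht : t ∈ I) (hst : s ≤ t) (hroom : t - 2 * H ∈ I ∨ t + 2 * H ∈ I)
    {h : ℕ → ℝ} (hh : ∀ i, 0 ≤ h i ∧ h i ≤ H) (N : ℕ) :
    ∃ u : ℕ → ℝ, u 0 = s ∧ u (N + 1) = t ∧ (∀ i ≤ N + 1, u i ∈ I) ∧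
      (∀ i < N, |u (i + 1) - u i| = h i) ∧
      ∑ i ∈ range (N + 1), |u (i + 1) - u i| ≤ max (t - s) (∑ i ∈ range N, h i + 2 * H) := by
  have hH : 0 ≤ H := (hh 0).1.trans (hh 0).2
  obtain ⟨c, hc, hc', htc, hct⟩ : ∃ c ∈ I, c - 2 * H ∈ I ∧ t ≤ c ∧ c - 2 * H ≤ t := by
    rcases hroom with h' | h'
    · exact ⟨t, ht, h', le_rfl, by linarith⟩
    · exact ⟨t + 2 * H, h', by rwa [add_sub_cancel_right], by linarith, by linarith⟩
  have hle : ∀ i, zigzag c h s i ≤ c := zigzag_le (hst.trans htc) fun i => (hh i).1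
  have hmem : ∀ i, zigzag c h s i ∈ I := fun i => by
    rcases zigzag_eq_or_le (c := c) (s := s) hh i with e | e
    · refine hI.out hs hc ⟨?_, hle i⟩
      rw [e]
      exact le_add_of_nonneg_right (sum_nonneg fun j _ => (hh j).1)
    · exact hI.out hc' hc ⟨e, hle i⟩
  have hgap : ∑ i ∈ range N, h i + |t - zigzag c h s N| ≤
      max (t - s) (∑ i ∈ range N, h i + 2 * H) := by
    have := hle N
    rcases zigzag_eq_or_le (c := c) (s := s) hh N with e | e
    · rcases le_total (zigzag c h s N) t with hzt | htz
      · refine le_max_of_le_left ?_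
        rw [abs_of_nonneg (sub_nonneg.2 hzt)]
        linarith
      · refine le_max_of_le_right ?_
        rw [abs_sub_comm, abs_of_nonneg (sub_nonneg.2 htz)]
        linarith
    · exact le_max_of_le_right (by gcongr; exact abs_sub_le_iff.2 ⟨by linarith, by linarith⟩)
  set u : ℕ → ℝ := fun i => if i ≤ N then zigzag c h s i else t
  have hstep : ∀ i < N, |u (i + 1) - u i| = h i := fun i hi => by
    simpa [u, hi.le, Nat.succ_le_of_lt hi] using abs_zigzag_succ_sub i (hh i).1
  refine ⟨u, by simp [u], by simp [u], fun i _ => ?_, hstep, ?_⟩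
  · dsimp only [u]
    split_ifs
    exacts [hmem i, ht]
  · rw [sum_range_succ, sum_congr rfl fun i hi => hstep i (mem_range.1 hi)]
    simpa [u] using hgap

lemma ofReal_div_le_setLIntegral_inv {f : ℝ → ℝ} {μ s t : ℝ} (hμ : 0 < μ)
    (hf : ∀ u ∈ Set.Ioc s t, 0 < f u ∧ f u ≤ μ) :
    ENNReal.ofReal ((t - s) / μ) ≤ ∫⁻ u in Set.Ioc s t, ENNReal.ofReal (f u)⁻¹ :=
  calc ENNReal.ofReal ((t - s) / μ) = ∫⁻ _ in Set.Ioc s t, ENNReal.ofReal μ⁻¹ := by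
        rw [setLIntegral_const, Real.volume_Ioc, ← ENNReal.ofReal_mul (by positivity),
          div_eq_inv_mul]
    _ ≤ _ := setLIntegral_mono' measurableSet_Ioc fun u hu =>
        ENNReal.ofReal_le_ofReal (inv_anti₀ (hf u hu).1 (hf u hu).2)

lemma setLIntegral_inv_le_ofReal_mul {f : ℝ → ℝ} {μ s t : ℝ} (hμ : 0 < μ)
    (hf : ∀ u ∈ Set.Ioc s t, 1 / μ ≤ f u) :
    ∫⁻ u in Set.Ioc s t, ENNReal.ofReal (f u)⁻¹ ≤ ENNReal.ofReal (μ * (t - s)) :=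
  calc ∫⁻ u in Set.Ioc s t, ENNReal.ofReal (f u)⁻¹ ≤ ∫⁻ _ in Set.Ioc s t, ENNReal.ofReal μ :=
        setLIntegral_mono' measurableSet_Ioc fun u hu => ENNReal.ofReal_le_ofReal <| by
          simpa using inv_anti₀ (by positivity) (hf u hu)
    _ = _ := by rw [setLIntegral_const, Real.volume_Ioc, ← ENNReal.ofReal_mul hμ.le]

section causal

variable {X : Type*} [MetricSpace X] {I : Set ℝ} {f : ℝ → ℝ} {μ : ℝ}

lemma WPCausal.dist_le (hμ : 0 < μ) {p q : ℝ × X} (h : WPCausal f p q)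
    (hf : ∀ u ∈ Set.Ioc p.1 q.1, 1 / μ ≤ f u) : dist p.2 q.2 ≤ μ * (q.1 - p.1) :=
  (ENNReal.ofReal_le_ofReal_iff (mul_nonneg hμ.le (sub_nonneg.2 h.1))).1
    (h.2.trans (setLIntegral_inv_le_ofReal_mul hμ hf))

lemma wpCausal_of_dist_le (hμ : 0 < μ) {p q : ℝ × X} (hpq : p.1 ≤ q.1)
    (hf : ∀ u ∈ Set.Ioc p.1 q.1, 0 < f u ∧ f u ≤ μ) (hd : μ * dist p.2 q.2 ≤ q.1 - p.1) :
    WPCausal f p q :=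
  ⟨hpq, (ENNReal.ofReal_le_ofReal ((le_div_iff₀' hμ).2 hd)).trans
    (ofReal_div_le_setLIntegral_inv hμ hf)⟩

lemma dist_le_of_wpCausal_or (hI : I.OrdConnected) (hμ : 0 < μ) (hf : ∀ t ∈ I, 1 / μ ≤ f t)
    {p q : ℝ × X} (hp : p.1 ∈ I) (hq : q.1 ∈ I) (h : WPCausal f p q ∨ WPCausal f q p) :
    dist p.2 q.2 ≤ μ * |q.1 - p.1| := by
  rcases h with h | h
  · exact (h.dist_le hμ fun u hu => hf u (hI.out hp hq (Set.Ioc_subset_Icc_self hu))).trans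
      (by gcongr; exact le_abs_self _)
  · rw [dist_comm, abs_sub_comm]
    exact (h.dist_le hμ fun u hu => hf u (hI.out hq hp (Set.Ioc_subset_Icc_self hu))).trans
      (by gcongr; exact le_abs_self _)

lemma wpCausal_or_of_dist_le (hI : I.OrdConnected) (hμ : 0 < μ)
    (hf : ∀ t ∈ I, 0 < f t ∧ f t ≤ μ) {p q : ℝ × X} (hp : p.1 ∈ I) (hq : q.1 ∈ I)
    (hd : μ * dist p.2 q.2 ≤ |q.1 - p.1|) : WPCausal f p q ∨ WPCausal f q p := by
  rcases le_total p.1 q.1 with h | h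
  · refine .inl (wpCausal_of_dist_le hμ h
      (fun u hu => hf u (hI.out hp hq (Set.Ioc_subset_Icc_self hu))) ?_)
    rwa [abs_of_nonneg (sub_nonneg.2 h)] at hd
  · refine .inr (wpCausal_of_dist_le hμ h
      (fun u hu => hf u (hI.out hq hp (Set.Ioc_subset_Icc_self hu))) ?_)
    rwa [dist_comm, abs_sub_comm, abs_of_nonneg (sub_nonneg.2 h)] at hd

end causal

section nullLengths

variable {X : Type*} [MetricSpace X] {I : Set ℝ} {f : ℝ → ℝ} {μ : ℝ}

def nullLengths (I : Set ℝ) (f : ℝ → ℝ) (p q : ℝ × X) : Set ℝ :=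
  { r | ∃ n σ, WPChain I f p q n σ ∧
    r = ∑ i ∈ range (n + 1), |(σ (i + 1)).1 - (σ i).1| }

lemma nonneg_of_mem_nullLengths {p q : ℝ × X} {r : ℝ} (hr : r ∈ nullLengths I f p q) :
    0 ≤ r := by
  obtain ⟨n, σ, -, rfl⟩ := hr
  exact sum_nonneg fun i _ => abs_nonneg _

lemma nullLengths_bddBelow (p q : ℝ × X) : BddBelow (nullLengths I f p q) :=
  ⟨0, fun _ => nonneg_of_mem_nullLengths⟩

lemma mem_nullLengths_symm {p q : ℝ × X} {r : ℝ} (hr : r ∈ nullLengths I f p q) :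
    r ∈ nullLengths I f q p := by
  obtain ⟨n, σ, ⟨h0, hn, hI, hc⟩, rfl⟩ := hr
  refine ⟨n, fun i => σ (n + 1 - i), ⟨by simpa using hn, by simpa using h0,
    fun i _ => hI _ (Nat.sub_le _ _), fun i hi => ?_⟩, ?_⟩
  · dsimp only
    rw [show n + 1 - i = n - i + 1 by omega, show n + 1 - (i + 1) = n - i by omega]
    exact (hc (n - i) (Nat.sub_le _ _)).symm
  · rw [← sum_range_reflect]
    refine sum_congr rfl fun i hi => ?_
    have := mem_range.1 hi
    dsimp only
    rw [show n + 1 - (i + 1) = n - i by omega, show n + 1 - i = n - i + 1 by omega,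
      show n + 1 - 1 - i = n - i by omega, abs_sub_comm]

lemma nullDist_comm (p q : ℝ × X) : nullDist I f p q = nullDist I f q p :=
  congrArg sInf (Set.Subset.antisymm (fun _ => mem_nullLengths_symm) fun _ => mem_nullLengths_symm)

lemma dist_le_mul_of_mem_nullLengths (hI : I.OrdConnected) (hμ : 1 ≤ μ)
    (hf : ∀ t ∈ I, 1 / μ ≤ f t) {p q : ℝ × X} {r : ℝ} (hr : r ∈ nullLengths I f p q) :
    dist p q ≤ μ * r := by
  have hr₀ := nonneg_of_mem_nullLengths hr
  obtain ⟨n, σ, ⟨rfl, rfl, hσI, hc⟩, rfl⟩ := hr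
  have htime : |(σ (n + 1)).1 - (σ 0).1| ≤ ∑ i ∈ range (n + 1), |(σ (i + 1)).1 - (σ i).1| := by
    simpa only [sum_range_sub (fun i => (σ i).1)] using
      abs_sum_le_sum_abs (fun i => (σ (i + 1)).1 - (σ i).1) (range (n + 1))
  have hspace : dist (σ 0).2 (σ (n + 1)).2 ≤
      μ * ∑ i ∈ range (n + 1), |(σ (i + 1)).1 - (σ i).1| :=
    calc dist (σ 0).2 (σ (n + 1)).2
        ≤ ∑ i ∈ range (n + 1), dist (σ i).2 (σ (i + 1)).2 :=
          dist_le_range_sum_dist (fun i => (σ i).2) (n + 1)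
      _ ≤ ∑ i ∈ range (n + 1), μ * |(σ (i + 1)).1 - (σ i).1| :=
          sum_le_sum fun i hi => by
            have := mem_range.1 hi
            exact dist_le_of_wpCausal_or hI (by linarith) hf (hσI i (by omega))
              (hσI (i + 1) (by omega)) (hc i (by omega))
      _ = _ := (mul_sum ..).symm
  rw [Prod.dist_eq, Real.dist_eq, abs_sub_comm]
  exact max_le (htime.trans (le_mul_of_one_le_left hr₀ hμ)) hspace

lemma mem_nullLengths_of_dist_le (hI : I.OrdConnected) (hμ : 0 < μ)
    (hf : ∀ t ∈ I, 0 < f t ∧ f t ≤ μ) {n : ℕ} {u : ℕ → ℝ} {z : ℕ → X}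
    (hu : ∀ i ≤ n + 1, u i ∈ I) (hz : ∀ i ≤ n, μ * dist (z i) (z (i + 1)) ≤ |u (i + 1) - u i|) :
    ∑ i ∈ range (n + 1), |u (i + 1) - u i| ∈
      nullLengths I f (u 0, z 0) (u (n + 1), z (n + 1)) :=
  ⟨n, fun i => (u i, z i), ⟨rfl, rfl, hu, fun i hi => wpCausal_or_of_dist_le hI hμ hf
    (hu i (by omega)) (hu (i + 1) (by omega)) (hz i hi)⟩, rfl⟩

end nullLengths

section nullDist

variable {X : Type*} [MetricSpace X] {I : Set ℝ} {f : ℝ → ℝ} {μ : ℝ}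

lemma exists_mem_nullLengths_le (hX : IsLengthSpace X) (hI : I.OrdConnected)
    (hInd : ∃ a ∈ I, ∃ b ∈ I, a < b) (hμ : 1 ≤ μ) (hf : ∀ t ∈ I, 1 / μ ≤ f t ∧ f t ≤ μ)
    {p q : ℝ × X} (hp : p.1 ∈ I) (hq : q.1 ∈ I) (hpq : p.1 ≤ q.1) {ε : ℝ} (hε : 0 < ε) :
    ∃ r ∈ nullLengths I f p q, r ≤ μ * dist p q + ε := by
  obtain ⟨a, ha, b, hb, hab⟩ := hInd
  obtain ⟨s, x⟩ := p
  obtain ⟨t, y⟩ := q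
  dsimp only at hp hq hpq
  have hμ₀ : 0 < μ := by linarith
  -- each time step is at most `H`, small enough to fit in `I` and to cost at most `ε / 2`
  set H := min ((b - a) / 4) (ε / 4)
  have hH₀ : 0 < H := lt_min (by linarith) (by linarith)
  obtain ⟨N, z, hz0, hzN, hzd, hzsum⟩ :=
    hX.exists_fine_subdivision x y (div_pos hH₀ hμ₀) (div_pos hε (mul_pos two_pos hμ₀))
  set h := fun i => μ * dist (z i) (z (i + 1))
  have hh : ∀ i, 0 ≤ h i ∧ h i ≤ H := fun i =>
    ⟨by positivity, (le_div_iff₀' hμ₀).1 (hzd i)⟩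
  have hroom := sub_mem_or_add_mem_of_ordConnected hI ha hb hq (by positivity : 0 ≤ 2 * H)
    (by linarith [min_le_left ((b - a) / 4) (ε / 4)])
  obtain ⟨u, hu0, huN, huI, hustep, husum⟩ := exists_time_schedule hI hp hq hpq hroom hh N
  have hmem := mem_nullLengths_of_dist_le (z := z) hI hμ₀
    (fun t ht => ⟨(by positivity : 0 < 1 / μ).trans_le (hf t ht).1, (hf t ht).2⟩) huI
    fun i hi => by
      rcases hi.lt_or_eq with hi | rfl
      · exact (hustep i hi).ge
      · rw [hzN i le_rfl, hzN (i + 1) (by omega), dist_self, mul_zero]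
        exact abs_nonneg _
  rw [hu0, huN, hz0, hzN (N + 1) (by omega)] at hmem
  refine ⟨_, hmem, husum.trans ?_⟩
  have hS : ∑ i ∈ range N, h i ≤ μ * dist x y + ε / 2 := by
    calc ∑ i ∈ range N, h i = μ * ∑ i ∈ range N, dist (z i) (z (i + 1)) := (mul_sum ..).symm
      _ ≤ μ * (dist x y + ε / (2 * μ)) := by gcongr
      _ = μ * dist x y + ε / 2 := by field_simp
  have hdist : dist (s, x) (t, y) = max (t - s) (dist x y) := by
    rw [Prod.dist_eq, Real.dist_eq, abs_sub_comm, abs_of_nonneg (sub_nonneg.2 hpq)]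
  rw [hdist]
  have hmax : max (t - s) (dist x y) ≤ μ * max (t - s) (dist x y) :=
    le_mul_of_one_le_left (le_max_of_le_right dist_nonneg) hμ
  refine max_le (by linarith [le_max_left (t - s) (dist x y)]) ?_
  have : μ * dist x y ≤ μ * max (t - s) (dist x y) := by gcongr; exact le_max_right _ _
  linarith [min_le_right ((b - a) / 4) (ε / 4)]

lemma nullDist_le_mul_dist (hX : IsLengthSpace X) (hI : I.OrdConnected)
    (hInd : ∃ a ∈ I, ∃ b ∈ I, a < b) (hμ : 1 ≤ μ) (hf : ∀ t ∈ I, 1 / μ ≤ f t ∧ f t ≤ μ)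
    {p q : ℝ × X} (hp : p.1 ∈ I) (hq : q.1 ∈ I) : nullDist I f p q ≤ μ * dist p q := by
  wlog hpq : p.1 ≤ q.1 generalizing p q
  · rw [nullDist_comm, dist_comm]
    exact this hq hp (le_of_not_ge hpq)
  refine le_of_forall_pos_le_add fun ε hε => ?_
  obtain ⟨r, hr, hrle⟩ := exists_mem_nullLengths_le hX hI hInd hμ hf hp hq hpq hε
  exact (csInf_le (nullLengths_bddBelow p q) hr).trans hrle

lemma dist_div_le_nullDist (hX : IsLengthSpace X) (hI : I.OrdConnected)
    (hInd : ∃ a ∈ I, ∃ b ∈ I, a < b) (hμ : 1 ≤ μ) (hf : ∀ t ∈ I, 1 / μ ≤ f t ∧ f t ≤ μ)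
    {p q : ℝ × X} (hp : p.1 ∈ I) (hq : q.1 ∈ I) : dist p q / μ ≤ nullDist I f p q := by
  have hne : (nullLengths I f p q).Nonempty := by
    rcases le_total p.1 q.1 with hpq | hqp
    · obtain ⟨r, hr, -⟩ := exists_mem_nullLengths_le hX hI hInd hμ hf hp hq hpq one_pos
      exact ⟨r, hr⟩
    · obtain ⟨r, hr, -⟩ := exists_mem_nullLengths_le hX hI hInd hμ hf hq hp hqp one_pos
      exact ⟨r, mem_nullLengths_symm hr⟩
  refine le_csInf hne fun r hr => (div_le_iff₀' (by linarith)).2 ?_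
  exact dist_le_mul_of_mem_nullLengths hI hμ (fun t ht => (hf t ht).1) hr

lemma nullDist_const_one (hX : IsLengthSpace X) (hI : I.OrdConnected)
    (hInd : ∃ a ∈ I, ∃ b ∈ I, a < b) {p q : ℝ × X} (hp : p.1 ∈ I) (hq : q.1 ∈ I) :
    nullDist I (fun _ => 1) p q = dist p q := by
  have hone : ∀ t ∈ I, 1 / (1 : ℝ) ≤ (fun _ => (1 : ℝ)) t ∧ (fun _ => (1 : ℝ)) t ≤ 1 :=
    fun _ _ => by norm_num
  exact le_antisymm (by simpa using nullDist_le_mul_dist hX hI hInd le_rfl hone hp hq)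
    (by simpa using dist_div_le_nullDist hX hI hInd le_rfl hone hp hq)

end nullDist

theorem stmt8_general {X : Type*} [MetricSpace X]
    (hX : ∀ x y : X, ∀ ε : ℝ, 0 < ε →
      ∃ z : X, max (dist x z) (dist z y) ≤ dist x y / 2 + ε)
    (I : Set ℝ) (hIc : I.OrdConnected)
    (hInd : ∃ a ∈ I, ∃ b ∈ I, a < b)
    (lam : ℝ) (hlam : 1 < lam)
    (f : ℕ → ℝ → ℝ)
    (hbd : ∀ j, ∀ t ∈ I, 1 / lam ≤ f j t ∧ f j t ≤ lam) :
    ∀ j : ℕ, ∀ p q : ℝ × X, p.1 ∈ I → q.1 ∈ I → p ≠ q →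
      1 / lam ≤ nullDist I (f j) p q / nullDist I (fun _ => (1 : ℝ)) p q ∧
      nullDist I (f j) p q / nullDist I (fun _ => (1 : ℝ)) p q ≤ lam := by
  intro j p q hp hq hne
  have hpq : 0 < dist p q := dist_pos.2 hne
  rw [nullDist_const_one hX hIc hInd hp hq, le_div_iff₀ hpq, div_le_iff₀ hpq,
    one_div_mul_eq_div]
  exact ⟨dist_div_le_nullDist hX hIc hInd hlam.le (hbd j) hp hq,
    nullDist_le_mul_dist hX hIc hInd hlam.le (hbd j) hp hq⟩

/-- for a length space `X`, a closed nondegenerate interval `I`, `λ > 1` and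
warping functions `f_j` with `1/λ ≤ f_j ≤ λ` on `I`, for all `j` and `p ≠ q` in `I × X`:
`1/λ ≤ d̂_{f_j}(p,q) / d̂_σ(p,q) ≤ λ`. -/
theorem stmt8 {X : Type*} [MetricSpace X]
    (hX : ∀ x y : X, ∀ ε : ℝ, 0 < ε →
      ∃ z : X, max (dist x z) (dist z y) ≤ dist x y / 2 + ε)
    (I : Set ℝ) (hIclosed : IsClosed I) (hIc : I.OrdConnected)
    (hInd : ∃ a ∈ I, ∃ b ∈ I, a < b)
    (lam : ℝ) (hlam : 1 < lam)
    (f : ℕ → ℝ → ℝ) (hf : ∀ j, Measurable (f j))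
    (hbd : ∀ j, ∀ t ∈ I, 1 / lam ≤ f j t ∧ f j t ≤ lam) :
    ∀ j : ℕ, ∀ p q : ℝ × X, p.1 ∈ I → q.1 ∈ I → p ≠ q →
      1 / lam ≤ nullDist I (f j) p q / nullDist I (fun _ => (1 : ℝ)) p q ∧
      nullDist I (f j) p q / nullDist I (fun _ => (1 : ℝ)) p q ≤ lam :=
  stmt8_general hX I hIc hInd lam hlam f hbd
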